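/- arXiv:2508.03482 — 9 statements merged into one kernel-verified Lean document; each statement's English description precedes it below -/
import Mathlib

section
/- The function F attains a global maximum on [0,∞) at some point M^b > 0, i.e. there exists M^b > 0 such that F(M) ≤ F(M^b) for all M ≥ 0 and F(M^b) > 0. -/
/-- Density-dependent fecundity function ψ(M) = (1+(1−z)M/k)^{−(k+1)}. -/
noncomputable def psi (k z M : ℝ) : ℝ := (1 + (1 - z) * M / k) ^ (-(k + 1))

/-- Mating probability function φ(M) = 1 − ((1+(1−αz)M/k)/(1+(1−z)M/k))^{−(k+1)}. -/
noncomputable def phi (k z a M : ℝ) : ℝ :=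
  1 - ((1 + (1 - a * z) * M / k) / (1 + (1 - z) * M / k)) ^ (-(k + 1))

/-- Density-dependence function F(M) = ψ(M)·φ(M). -/
noncomputable def Ffun (k z a M : ℝ) : ℝ := psi k z M * phi k z a M

/-- F attains a global maximum on [0,∞) at some point M^b > 0, and F(M^b) > 0. -/
theorem stmt4 (k z a : ℝ) (hk : 0 < k) (hz : z ∈ Set.Ioo (0:ℝ) 1)
    (ha : a ∈ Set.Ioo (0:ℝ) 1) :
    ∃ Mb : ℝ, 0 < Mb ∧ (∀ M : ℝ, 0 ≤ M → Ffun k z a M ≤ Ffun k z a Mb) ∧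
      0 < Ffun k z a Mb := by
  obtain ⟨hz0, hz1⟩ := hz
  obtain ⟨ha0, ha1⟩ := ha
  have h1z : (0:ℝ) < 1 - z := by linarith
  have haz : a * z < z := by nlinarith
  have h1az : (0:ℝ) < 1 - a * z := by nlinarith
  have hE : -(k + 1) < 0 := by linarith
  have hden : ∀ M : ℝ, 0 ≤ M → 0 < 1 + (1 - z) * M / k := by
    intro M hM
    have : 0 ≤ (1 - z) * M / k := div_nonneg (mul_nonneg h1z.le hM) hk.le
    linarith
  have hnum : ∀ M : ℝ, 0 ≤ M → 0 < 1 + (1 - a * z) * M / k := by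
    intro M hM
    have : 0 ≤ (1 - a * z) * M / k := div_nonneg (mul_nonneg h1az.le hM) hk.le
    linarith
  have hpsi_pos : ∀ M : ℝ, 0 ≤ M → 0 < psi k z M := fun M hM =>
    Real.rpow_pos_of_pos (hden M hM) _
  have hratio_pos : ∀ M : ℝ, 0 ≤ M →
      0 < (1 + (1 - a * z) * M / k) / (1 + (1 - z) * M / k) := fun M hM =>
    div_pos (hnum M hM) (hden M hM)
  have hratio_ge : ∀ M : ℝ, 0 ≤ M →
      1 ≤ (1 + (1 - a * z) * M / k) / (1 + (1 - z) * M / k) := by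
    intro M hM
    rw [le_div_iff₀ (hden M hM), one_mul]
    have h := (div_le_div_iff_of_pos_right hk).mpr (by nlinarith : (1 - z) * M ≤ (1 - a * z) * M)
    linarith
  have hphi_nonneg : ∀ M : ℝ, 0 ≤ M → 0 ≤ phi k z a M := by
    intro M hM
    have := Real.rpow_le_one_of_one_le_of_nonpos (hratio_ge M hM) hE.le
    unfold phi; linarith
  have hphi_le_one : ∀ M : ℝ, 0 ≤ M → phi k z a M ≤ 1 := by
    intro M hM
    have := Real.rpow_pos_of_pos (hratio_pos M hM) (-(k + 1))
    unfold phi; linarith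
  have hF_le_psi : ∀ M : ℝ, 0 ≤ M → Ffun k z a M ≤ psi k z M := by
    intro M hM
    have := mul_le_mul_of_nonneg_left (hphi_le_one M hM) (hpsi_pos M hM).le
    simpa [Ffun] using this
  -- F(1) > 0
  have hr1 : 1 < (1 + (1 - a * z) * 1 / k) / (1 + (1 - z) * 1 / k) := by
    rw [lt_div_iff₀ (hden 1 zero_le_one), one_mul]
    have h := (div_lt_div_iff_of_pos_right hk).mpr (by nlinarith : (1 - z) * 1 < (1 - a * z) * 1)
    linarith
  have hphi1 : 0 < phi k z a 1 := by
    have := Real.rpow_lt_one_of_one_lt_of_neg hr1 hE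
    unfold phi; linarith
  have hc : 0 < Ffun k z a 1 := mul_pos (hpsi_pos 1 zero_le_one) hphi1
  set c := Ffun k z a 1 with hc_def
  -- continuity on [0, ∞)
  have hcont : ∀ M : ℝ, 0 ≤ M → ContinuousAt (Ffun k z a) M := by
    intro M hM
    have h1 : ContinuousAt (fun M : ℝ => 1 + (1 - z) * M / k) M := by fun_prop
    have h2 : ContinuousAt (fun M : ℝ => 1 + (1 - a * z) * M / k) M := by fun_prop
    have hA : ContinuousAt (fun M : ℝ => (1 + (1 - z) * M / k) ^ (-(k + 1))) M :=
      h1.rpow_const (Or.inl (hden M hM).ne')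
    have hB : ContinuousAt
        (fun M : ℝ => ((1 + (1 - a * z) * M / k) / (1 + (1 - z) * M / k)) ^ (-(k + 1))) M :=
      (h2.div h1 (hden M hM).ne').rpow_const (Or.inl (hratio_pos M hM).ne')
    exact hA.mul (continuousAt_const.sub hB)
  -- psi tends to 0 at infinity
  have hbase : Filter.Tendsto (fun M : ℝ => 1 + (1 - z) * M / k) Filter.atTop Filter.atTop := by
    apply Filter.tendsto_atTop_add_const_left
    have : Filter.Tendsto (fun M : ℝ => (1 - z) * M) Filter.atTop Filter.atTop :=
      Filter.Tendsto.const_mul_atTop h1z Filter.tendsto_id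
    exact this.atTop_div_const hk
  have htend : Filter.Tendsto (fun M => psi k z M) Filter.atTop (nhds 0) := by
    have := (tendsto_rpow_neg_atTop (by linarith : (0:ℝ) < k + 1)).comp hbase
    simpa [psi, Function.comp_def] using this
  have hev : ∀ᶠ M in Filter.atTop, psi k z M < c := htend.eventually (gt_mem_nhds hc)
  obtain ⟨R, hR⟩ := Filter.eventually_atTop.mp hev
  set R' := max R 1 with hR'_def
  have h1R' : (1:ℝ) ≤ R' := le_max_right R 1
  have h0R' : (0:ℝ) ≤ R' := le_trans zero_le_one h1R'
  have hcompact : IsCompact (Set.Icc (0:ℝ) R') := isCompact_Icc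
  obtain ⟨Mb, hMb_mem, hMb_max⟩ := hcompact.exists_isMaxOn ⟨0, by simp [h0R']⟩
    (fun M hM => (hcont M hM.1).continuousWithinAt)
  have h1mem : (1:ℝ) ∈ Set.Icc (0:ℝ) R' := ⟨zero_le_one, h1R'⟩
  have hcMb : c ≤ Ffun k z a Mb := hMb_max h1mem
  have hFMb : 0 < Ffun k z a Mb := lt_of_lt_of_le hc hcMb
  have hF0 : Ffun k z a 0 = 0 := by
    simp [Ffun, phi]
  have hMb_pos : 0 < Mb := by
    rcases lt_or_eq_of_le hMb_mem.1 with h | h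
    · exact h
    · exfalso; rw [← h, hF0] at hFMb; exact lt_irrefl 0 hFMb
  refine ⟨Mb, hMb_pos, ?_, hFMb⟩
  intro M hM
  by_cases hMR : M ≤ R'
  · exact hMb_max ⟨hM, hMR⟩
  · push_neg at hMR
    have hMR2 : R ≤ M := le_trans (le_max_left R 1) hMR.le
    exact (((hF_le_psi M hM).trans_lt (hR M hMR2)).le).trans hcMb
end

section
/- If R0 · F(M^b) > 1, where M^b > 0 is a point at which F attains its global maximum on [0,∞), then there exist M_u and M_s with 0 < M_u < M^b < M_s such that R0·F(M_u) = 1 and R0·F(M_s) = 1; in particular the one-dimensional model f(M, R0) = (μ_H+μ_P)(R0·F(M) − 1)·M has at least two distinct positive equilibria (the transmission breakpoint and the endemic equilibrium). -/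
/-- One-dimensional vector field f(M, R0) = (μ_H+μ_P)(R0·F(M) − 1)·M. -/
noncomputable def fOne (k z a muH muP R0 M : ℝ) : ℝ :=
  (muH + muP) * (R0 * Ffun k z a M - 1) * M

lemma base_pos (k c M : ℝ) (hk : 0 < k) (hc : 0 < c) (hM : 0 ≤ M) :
    0 < 1 + c * M / k := by positivity

lemma Ffun_cont (k z a : ℝ) (hk : 0 < k) (hz : z ∈ Set.Ioo (0:ℝ) 1)
    (ha : a ∈ Set.Ioo (0:ℝ) 1) : ContinuousOn (Ffun k z a) (Set.Ici 0) := by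
  have hc : 0 < 1 - z := by linarith [hz.2]
  have hd : 0 < 1 - a * z := by nlinarith [hz.1, hz.2, ha.1, ha.2]
  have h1 : ∀ M ∈ Set.Ici (0:ℝ), (0:ℝ) < 1 + (1 - z) * M / k :=
    fun M hM => base_pos k _ M hk hc hM
  have h2 : ∀ M ∈ Set.Ici (0:ℝ), (0:ℝ) < 1 + (1 - a * z) * M / k :=
    fun M hM => base_pos k _ M hk hd hM
  have hbase : ContinuousOn (fun M : ℝ => 1 + (1 - z) * M / k) (Set.Ici 0) := by
    fun_prop
  have hbase2 : ContinuousOn (fun M : ℝ => 1 + (1 - a * z) * M / k) (Set.Ici 0) := by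
    fun_prop
  have hpsi : ContinuousOn (psi k z) (Set.Ici 0) := by
    apply hbase.rpow_const
    exact fun M hM => Or.inl (ne_of_gt (h1 M hM))
  have hphi : ContinuousOn (phi k z a) (Set.Ici 0) := by
    apply continuousOn_const.sub
    apply ContinuousOn.rpow_const
    · exact hbase2.div hbase (fun M hM => ne_of_gt (h1 M hM))
    · exact fun M hM => Or.inl (ne_of_gt (div_pos (h2 M hM) (h1 M hM)))
  exact hpsi.mul hphi

lemma Ffun_zero (k z a : ℝ) : Ffun k z a 0 = 0 := by
  simp [Ffun, psi, phi]

lemma Ffun_le (k z a M : ℝ) (hk : 0 < k) (hz : z ∈ Set.Ioo (0:ℝ) 1)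
    (ha : a ∈ Set.Ioo (0:ℝ) 1) (hM : 0 < M) :
    Ffun k z a M ≤ k / ((1 - z) * M) := by
  have hc : 0 < 1 - z := by linarith [hz.2]
  have hd : 0 < 1 - a * z := by nlinarith [hz.1, hz.2, ha.1, ha.2]
  have hb1 : (0:ℝ) < 1 + (1 - z) * M / k := base_pos k _ M hk hc hM.le
  have hb2 : (0:ℝ) < 1 + (1 - a * z) * M / k := base_pos k _ M hk hd hM.le
  have hb1' : (1:ℝ) ≤ 1 + (1 - z) * M / k := by
    have : 0 ≤ (1 - z) * M / k := by positivity
    linarith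
  have hpsi_le : psi k z M ≤ (1 + (1 - z) * M / k)⁻¹ := by
    have := Real.rpow_le_rpow_of_exponent_le hb1' (by linarith : -(k+1) ≤ -1)
    simpa [psi, Real.rpow_neg_one, neg_add, add_comm] using this
  have hinv : (1 + (1 - z) * M / k)⁻¹ ≤ k / ((1 - z) * M) := by
    have h0 : (0:ℝ) < (1 - z) * M / k := by positivity
    have := inv_anti₀ h0 (by linarith : (1 - z) * M / k ≤ 1 + (1 - z) * M / k)
    calc (1 + (1 - z) * M / k)⁻¹ ≤ ((1 - z) * M / k)⁻¹ := this
      _ = k / ((1 - z) * M) := by rw [inv_div]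
  have hphi_le : phi k z a M ≤ 1 := by
    have : 0 ≤ ((1 + (1 - a * z) * M / k) / (1 + (1 - z) * M / k)) ^ (-(k + 1)) :=
      Real.rpow_nonneg (le_of_lt (div_pos hb2 hb1)) _
    unfold phi; linarith
  have hpsi_nonneg : 0 ≤ psi k z M := Real.rpow_nonneg hb1.le _
  calc Ffun k z a M ≤ psi k z M * 1 := by
        unfold Ffun; exact mul_le_mul_of_nonneg_left hphi_le hpsi_nonneg
    _ = psi k z M := mul_one _
    _ ≤ (1 + (1 - z) * M / k)⁻¹ := hpsi_le
    _ ≤ k / ((1 - z) * M) := hinv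

theorem stmt5_aux (k z a muH muP R0 : ℝ) (hk : 0 < k) (hz : z ∈ Set.Ioo (0:ℝ) 1)
    (ha : a ∈ Set.Ioo (0:ℝ) 1) (hmuH : 0 < muH) (hmuP : 0 < muP) (hR0 : 0 < R0)
    (Mb : ℝ) (hMb : 0 < Mb) (hmax : ∀ M : ℝ, 0 ≤ M → Ffun k z a M ≤ Ffun k z a Mb)
    (hgt : 1 < R0 * Ffun k z a Mb) :
    ∃ Mu Ms : ℝ, 0 < Mu ∧ Mu < Mb ∧ Mb < Ms ∧
      R0 * Ffun k z a Mu = 1 ∧ R0 * Ffun k z a Ms = 1 := by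
  have hc : 0 < 1 - z := by linarith [hz.2]
  set g : ℝ → ℝ := fun M => R0 * Ffun k z a M with hg
  have hcont : ContinuousOn g (Set.Ici 0) :=
    continuousOn_const.mul (Ffun_cont k z a hk hz ha)
  -- breakpoint Mu
  have h0 : g 0 = 0 := by simp [hg, Ffun_zero]
  have hivt1 : (1:ℝ) ∈ Set.Ioo (g 0) (g Mb) := by
    rw [h0]; exact ⟨one_pos, hgt⟩
  obtain ⟨Mu, hMuI, hMu1⟩ := intermediate_value_Ioo hMb.le
    (hcont.mono (Set.Icc_subset_Ici_self)) hivt1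
  -- large point N with g N < 1
  set N : ℝ := max (Mb + 1) (R0 * k / (1 - z) + 1) with hN
  have hMbN : Mb < N := lt_of_lt_of_le (by linarith) (le_max_left _ _)
  have hNpos : 0 < N := hMb.trans hMbN
  have hNbig : R0 * k / (1 - z) < N := lt_of_lt_of_le (by linarith) (le_max_right _ _)
  have hgN : g N < 1 := by
    have hle := Ffun_le k z a N hk hz ha hNpos
    have h2 : R0 * (k / ((1 - z) * N)) < 1 := by
      rw [mul_div_assoc'] at *
      rw [div_lt_one (by positivity)]
      have := (div_lt_iff₀ hc).mp hNbig
      nlinarith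
    calc g N ≤ R0 * (k / ((1 - z) * N)) := mul_le_mul_of_nonneg_left hle hR0.le
      _ < 1 := h2
  have hivt2 : (1:ℝ) ∈ Set.Ioo (g N) (g Mb) := ⟨hgN, hgt⟩
  obtain ⟨Ms, hMsI, hMs1⟩ := intermediate_value_Ioo' hMbN.le
    (hcont.mono (fun x hx => le_trans hMb.le hx.1)) hivt2
  exact ⟨Mu, Ms, hMuI.1, hMuI.2, hMsI.1, hMu1, hMs1⟩

/-- If R0·F(M^b) > 1 at a global maximum point M^b > 0 of F on [0,∞), then there exist
0 < M_u < M^b < M_s with R0·F(M_u) = 1 and R0·F(M_s) = 1; in particular the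
one-dimensional model has at least two distinct positive equilibria. -/
theorem stmt5 (k z a muH muP R0 : ℝ) (hk : 0 < k) (hz : z ∈ Set.Ioo (0:ℝ) 1)
    (ha : a ∈ Set.Ioo (0:ℝ) 1) (hmuH : 0 < muH) (hmuP : 0 < muP) (hR0 : 0 < R0)
    (Mb : ℝ) (hMb : 0 < Mb) (hmax : ∀ M : ℝ, 0 ≤ M → Ffun k z a M ≤ Ffun k z a Mb)
    (hgt : 1 < R0 * Ffun k z a Mb) :
    ∃ Mu Ms : ℝ, 0 < Mu ∧ Mu < Mb ∧ Mb < Ms ∧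
      R0 * Ffun k z a Mu = 1 ∧ R0 * Ffun k z a Ms = 1 ∧
      fOne k z a muH muP R0 Mu = 0 ∧ fOne k z a muH muP R0 Ms = 0 := by
  obtain ⟨Mu, Ms, h1, h2, h3, h4, h5⟩ :=
    stmt5_aux k z a muH muP R0 hk hz ha hmuH hmuP hR0 Mb hMb hmax hgt
  exact ⟨Mu, Ms, h1, h2, h3, h4, h5,
    by unfold fOne; rw [h4]; ring, by unfold fOne; rw [h5]; ring⟩
end

section
/- Suppose M^b > 0 satisfies F′(M^b) = 0 and F″(M^b) ≠ 0, and set R0^b = 1/F(M^b) (with F(M^b) > 0). Then the Sotomayor saddle-node conditions hold at (M^b, R0^b): f(M^b, R0^b) = 0, ∂f/∂M(M^b, R0^b) = 0, ∂²f/∂M²(M^b, R0^b) = (μ_H+μ_P)·R0^b·M^b·F″(M^b) ≠ 0, and ∂f/∂R0(M^b, R0^b) = (μ_H+μ_P)·M^b·F(M^b) ≠ 0. -/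
lemma Fsmooth (k z a : ℝ) (hk : 0 < k) (hz : z ∈ Set.Ioo (0:ℝ) 1)
    (ha : a ∈ Set.Ioo (0:ℝ) 1) :
    ContDiffOn ℝ (⊤ : ℕ∞) (Ffun k z a) (Set.Ioi 0) := by
  have h1z : (0:ℝ) < 1 - z := by linarith [hz.2]
  have haz : (0:ℝ) < 1 - a * z := by nlinarith [ha.1, ha.2, hz.1, hz.2]
  intro M hM
  have hM0 : (0:ℝ) < M := hM
  have hb1 : (0:ℝ) < 1 + (1 - z) * M / k := by positivity
  have hb2 : (0:ℝ) < 1 + (1 - a * z) * M / k := by positivity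
  have cd1 : ContDiffAt ℝ (⊤ : ℕ∞) (fun M : ℝ => 1 + (1 - z) * M / k) M :=
    contDiffAt_const.add ((contDiffAt_const.mul contDiffAt_id).div_const k)
  have cd2 : ContDiffAt ℝ (⊤ : ℕ∞) (fun M : ℝ => 1 + (1 - a * z) * M / k) M :=
    contDiffAt_const.add ((contDiffAt_const.mul contDiffAt_id).div_const k)
  have cdpsi : ContDiffAt ℝ (⊤ : ℕ∞) (psi k z) M :=
    cd1.rpow_const_of_ne hb1.ne'
  have cdq : ContDiffAt ℝ (⊤ : ℕ∞)
      (fun M : ℝ => (1 + (1 - a * z) * M / k) / (1 + (1 - z) * M / k)) M :=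
    cd2.div cd1 hb1.ne'
  have hq : (1 + (1 - a * z) * M / k) / (1 + (1 - z) * M / k) ≠ 0 :=
    (div_pos hb2 hb1).ne'
  have cdphi : ContDiffAt ℝ (⊤ : ℕ∞) (phi k z a) M :=
    contDiffAt_const.sub (cdq.rpow_const_of_ne hq)
  exact (cdpsi.mul cdphi).contDiffWithinAt

/-- Sotomayor saddle-node conditions at (M^b, R0^b) with R0^b = 1/F(M^b),
when F′(M^b) = 0 and F″(M^b) ≠ 0. -/
theorem stmt9 (k z a muH muP : ℝ) (hk : 0 < k) (hz : z ∈ Set.Ioo (0:ℝ) 1)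
    (ha : a ∈ Set.Ioo (0:ℝ) 1) (hmuH : 0 < muH) (hmuP : 0 < muP)
    (Mb : ℝ) (hMb : 0 < Mb) (hder : deriv (Ffun k z a) Mb = 0)
    (hder2 : deriv (deriv (Ffun k z a)) Mb ≠ 0) (hFpos : 0 < Ffun k z a Mb)
    (R0b : ℝ) (hR0b : R0b = 1 / Ffun k z a Mb) :
    fOne k z a muH muP R0b Mb = 0 ∧
    deriv (fun M => fOne k z a muH muP R0b M) Mb = 0 ∧
    deriv (deriv (fun M => fOne k z a muH muP R0b M)) Mb =
      (muH + muP) * R0b * Mb * deriv (deriv (Ffun k z a)) Mb ∧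
    deriv (deriv (fun M => fOne k z a muH muP R0b M)) Mb ≠ 0 ∧
    deriv (fun r => fOne k z a muH muP r Mb) R0b =
      (muH + muP) * Mb * Ffun k z a Mb ∧
    deriv (fun r => fOne k z a muH muP r Mb) R0b ≠ 0 := by
  set F := Ffun k z a with hF
  set c := muH + muP with hc
  have hc0 : 0 < c := by positivity
  have hRF : R0b * F Mb = 1 := by
    rw [hR0b]; field_simp
  have hopen : IsOpen (Set.Ioi (0:ℝ)) := isOpen_Ioi
  have hnbhd : Set.Ioi (0:ℝ) ∈ nhds Mb := hopen.mem_nhds hMb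
  have hsm := Fsmooth k z a hk hz ha
  have hsm' : ContDiffOn ℝ (⊤ : ℕ∞) (deriv F) (Set.Ioi 0) :=
    hsm.deriv_of_isOpen hopen (mod_cast le_top)
  have hFdiff : ∀ M ∈ Set.Ioi (0:ℝ), DifferentiableAt ℝ F M := fun M hM =>
    ((hsm M hM).contDiffAt (hopen.mem_nhds hM)).differentiableAt (by simp)
  have hF'diff : DifferentiableAt ℝ (deriv F) Mb :=
    ((hsm' Mb hMb).contDiffAt hnbhd).differentiableAt (by simp)
  -- f(Mb) = 0
  have h1 : fOne k z a muH muP R0b Mb = 0 := by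
    simp [fOne, ← hF, ← hc, hRF]
  -- derivative in M on Ioi 0
  have hderivM : ∀ M ∈ Set.Ioi (0:ℝ),
      deriv (fun M => fOne k z a muH muP R0b M) M
        = c * R0b * (deriv F M * M + F M) - c := by
    intro M hM
    have hF' : HasDerivAt F (deriv F M) M := (hFdiff M hM).hasDerivAt
    have h : HasDerivAt (fun M => fOne k z a muH muP R0b M)
        (c * R0b * (deriv F M * M + F M) - c) M := by
      have h0 : HasDerivAt (fun M : ℝ => c * R0b * (F M * M) - c * M)
          (c * R0b * (deriv F M * M + F M) - c) M := by
        have := ((hF'.mul (hasDerivAt_id M)).const_mul (c * R0b)).sub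
          ((hasDerivAt_id M).const_mul c)
        simpa [Pi.sub_def, mul_comm, mul_assoc, mul_add] using this
      have : (fun M : ℝ => c * R0b * (F M * M) - c * M)
          = fun M => fOne k z a muH muP R0b M := by
        funext x; simp [fOne, ← hF, ← hc]; ring
      rwa [this] at h0
    exact h.deriv
  -- first derivative at Mb is 0
  have h2 : deriv (fun M => fOne k z a muH muP R0b M) Mb = 0 := by
    rw [hderivM Mb hMb, hder,
      show c * R0b * (0 * Mb + F Mb) - c = c * (R0b * F Mb) - c by ring, hRF]
    ring
  -- second derivative
  have h3 : deriv (deriv (fun M => fOne k z a muH muP R0b M)) Mb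
      = c * R0b * Mb * deriv (deriv F) Mb := by
    have heq : deriv (fun M => fOne k z a muH muP R0b M)
        =ᶠ[nhds Mb] fun M => c * R0b * (deriv F M * M + F M) - c :=
      Filter.eventuallyEq_of_mem hnbhd hderivM
    rw [heq.deriv_eq]
    have hF'' : HasDerivAt (deriv F) (deriv (deriv F) Mb) Mb := hF'diff.hasDerivAt
    have hFd : HasDerivAt F (deriv F Mb) Mb := (hFdiff Mb hMb).hasDerivAt
    have h0 : HasDerivAt (fun M => c * R0b * (deriv F M * M + F M) - c)
        (c * R0b * (deriv (deriv F) Mb * Mb + deriv F Mb + deriv F Mb)) Mb := by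
      have := (((hF''.mul (hasDerivAt_id Mb)).add hFd).const_mul (c * R0b)).sub_const c
      simpa [mul_add, mul_comm, mul_assoc] using this
    rw [h0.deriv, hder]
    ring
  have hR0 : 0 < R0b := by rw [hR0b]; positivity
  have h5 : deriv (fun r => fOne k z a muH muP r Mb) R0b
      = (muH + muP) * Mb * Ffun k z a Mb := by
    have : (fun r => fOne k z a muH muP r Mb)
        = fun r => (c * F Mb * Mb) * r - c * Mb := by
      funext r; simp [fOne, ← hF, ← hc]; ring
    rw [this]
    have h0 : HasDerivAt (fun r : ℝ => c * F Mb * Mb * r - c * Mb)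
        (c * F Mb * Mb * 1) R0b :=
      ((hasDerivAt_id R0b).const_mul (c * F Mb * Mb)).sub_const (c * Mb)
    rw [h0.deriv]; ring
  refine ⟨h1, h2, h3, ?_, h5, ?_⟩
  · rw [h3]
    exact mul_ne_zero (by positivity) hder2
  · rw [h5]
    have : 0 < Ffun k z a Mb := hFpos
    positivity
end

section
/- A point (M_0, M_1) with M_0 ≠ 0 and M_1 ≠ 0 is an equilibrium of the extended reduced model (i.e. f_0(M_0,M_1) = f_1(M_0,M_1) = 0) if and only if (R0/(βρ))·(β_0ρ_0q_0·F(M_0) + β_1ρ_1q_1·F(M_1)) = 1 and M_0/β_0 = M_1/β_1. -/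
/-- Extended reduced model, equation for the untreated group (β_0 = β, ρ_0 = ρ, q_0 = 1−c):
f_0(M_0,M_1) = (μ_H+μ_P)·[(R0·β_0/(βρ))·(ρ_0q_0·M_0·F(M_0) + ρ_1q_1·M_1·F(M_1)) − M_0]. -/
noncomputable def f0 (k z a beta rho c eh es muH muP R0 M0 M1 : ℝ) : ℝ :=
  (muH + muP) * ((R0 * beta / (beta * rho)) *
    (rho * (1 - c) * M0 * Ffun k z a M0 +
      (rho * (1 - es)) * c * M1 * Ffun k z a M1) - M0)

/-- Extended reduced model, equation for the treated group (β_1 = β(1−e_h), ρ_1 = ρ(1−e_s), q_1 = c). -/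
noncomputable def f1 (k z a beta rho c eh es muH muP R0 M0 M1 : ℝ) : ℝ :=
  (muH + muP) * ((R0 * (beta * (1 - eh)) / (beta * rho)) *
    (rho * (1 - c) * M0 * Ffun k z a M0 +
      (rho * (1 - es)) * c * M1 * Ffun k z a M1) - M1)

/-- A point (M_0,M_1) with M_0 ≠ 0 and M_1 ≠ 0 is an equilibrium of the extended reduced
model iff (R0/(βρ))·(β_0ρ_0q_0·F(M_0) + β_1ρ_1q_1·F(M_1)) = 1 and M_0/β_0 = M_1/β_1. -/
theorem stmt11 (k z a beta rho c eh es muH muP R0 : ℝ)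
    (hk : 0 < k) (hz : z ∈ Set.Ioo (0:ℝ) 1) (ha : a ∈ Set.Ioo (0:ℝ) 1)
    (hbeta : 0 < beta) (hrho : 0 < rho) (hc : c ∈ Set.Ioo (0:ℝ) 1)
    (heh : eh ∈ Set.Ico (0:ℝ) 1) (hes : es ∈ Set.Ico (0:ℝ) 1)
    (hmuH : 0 < muH) (hmuP : 0 < muP) (hR0 : 0 < R0)
    (M0 M1 : ℝ) (hM0 : M0 ≠ 0) (hM1 : M1 ≠ 0) :
    (f0 k z a beta rho c eh es muH muP R0 M0 M1 = 0 ∧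
     f1 k z a beta rho c eh es muH muP R0 M0 M1 = 0) ↔
    ((R0 / (beta * rho)) *
        (beta * rho * (1 - c) * Ffun k z a M0 +
          (beta * (1 - eh)) * (rho * (1 - es)) * c * Ffun k z a M1) = 1 ∧
     M0 / beta = M1 / (beta * (1 - eh))) := by
  have hb : beta ≠ 0 := ne_of_gt hbeta
  have hr : rho ≠ 0 := ne_of_gt hrho
  have hbr : beta * rho ≠ 0 := mul_ne_zero hb hr
  have he : (1:ℝ) - eh ≠ 0 := by have := heh.2; intro h; rw [sub_eq_zero] at h; linarith
  have hmu : muH + muP ≠ 0 := by positivity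
  simp only [f0, f1, mul_eq_zero, sub_eq_zero, hmu, false_or]
  set F0 := Ffun k z a M0 with hF0def
  set F1 := Ffun k z a M1 with hF1def
  constructor
  · rintro ⟨h1, h2⟩
    field_simp at h1 h2
    have hS : M1 = (1 - eh) * M0 := by
      have h : (beta * rho) * M1 = (beta * rho) * ((1 - eh) * M0) := by
        linear_combination (beta * rho) * ((1 - eh) * h1 - h2)
      exact mul_left_cancel₀ hbr h
    rw [hS] at h1
    constructor
    · field_simp
      have h : M0 * (R0 * (beta * rho * (1 - c) * F0 +
          beta * (1 - eh) * (rho * (1 - es)) * c * F1)) = M0 * (beta * rho) := by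
        linear_combination (beta * rho) * h1
      exact mul_left_cancel₀ (mul_ne_zero hM0 hbr) (by linear_combination h)
    · rw [hS]; field_simp
  · rintro ⟨h1, h2⟩
    field_simp at h1 h2
    have hS : M1 = (1 - eh) * M0 := by
      have h : beta * M1 = beta * ((1 - eh) * M0) := by linear_combination -beta * h2
      exact mul_left_cancel₀ hb h
    rw [hS]
    constructor
    · field_simp
      linear_combination h1
    · field_simp
      linear_combination h1
end

section
/- The line {(m, (1−e_h)m) : m ≥ 0} is invariant for the extended reduced model: for every m ≥ 0, f_1(m, (1−e_h)m) = (1−e_h)·f_0(m, (1−e_h)m), and f_0(m, (1−e_h)m) = (μ_H+μ_P)·(R0·G(m) − 1)·m, where G(m) = (1−c)F(m) + c(1−e_s)(1−e_h)F((1−e_h)m). -/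
/-- G(m) = (1−c)F(m) + c(1−e_s)(1−e_h)F((1−e_h)m). -/
noncomputable def Gfun (k z a c eh es m : ℝ) : ℝ :=
  (1 - c) * Ffun k z a m + c * (1 - es) * (1 - eh) * Ffun k z a ((1 - eh) * m)

/-- The line {(m, (1−e_h)m) : m ≥ 0} is invariant: f_1(m,(1−e_h)m) = (1−e_h)·f_0(m,(1−e_h)m),
and f_0(m,(1−e_h)m) = (μ_H+μ_P)·(R0·G(m) − 1)·m. -/
theorem stmt13 (k z a beta rho c eh es muH muP R0 : ℝ)
    (hk : 0 < k) (hz : z ∈ Set.Ioo (0:ℝ) 1) (ha : a ∈ Set.Ioo (0:ℝ) 1)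
    (hbeta : 0 < beta) (hrho : 0 < rho) (hc : c ∈ Set.Ioo (0:ℝ) 1)
    (heh : eh ∈ Set.Ico (0:ℝ) 1) (hes : es ∈ Set.Ico (0:ℝ) 1)
    (hmuH : 0 < muH) (hmuP : 0 < muP) (hR0 : 0 < R0) :
    ∀ m : ℝ, 0 ≤ m →
      f1 k z a beta rho c eh es muH muP R0 m ((1 - eh) * m) =
        (1 - eh) * f0 k z a beta rho c eh es muH muP R0 m ((1 - eh) * m) ∧
      f0 k z a beta rho c eh es muH muP R0 m ((1 - eh) * m) =
        (muH + muP) * (R0 * Gfun k z a c eh es m - 1) * m := by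
  intro m _
  have hb : beta ≠ 0 := ne_of_gt hbeta
  have hr : rho ≠ 0 := ne_of_gt hrho
  constructor <;> · simp only [f0, f1, Gfun]; field_simp
end

section
/- If R0 · G(m^b) > 1, where m^b > 0 is a point at which G attains its global maximum on [0,∞), then there exist m_u and m_s with 0 < m_u < m^b < m_s, R0·G(m_u) = 1 and R0·G(m_s) = 1; consequently (m_u, (1−e_h)m_u) and (m_s, (1−e_h)m_s) are two distinct nontrivial equilibria of the extended reduced model (both satisfy f_0 = f_1 = 0). -/
lemma base_one_le {k z M : ℝ} (hk : 0 < k) (hz : z ∈ Set.Ioo (0:ℝ) 1) (hM : 0 ≤ M) :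
    (1:ℝ) ≤ 1 + (1 - z) * M / k := by
  have : 0 ≤ (1 - z) * M / k :=
    div_nonneg (mul_nonneg (by linarith [hz.2]) hM) hk.le
  linarith

lemma base_le_base {k z a M : ℝ} (hk : 0 < k) (hz : z ∈ Set.Ioo (0:ℝ) 1)
    (ha : a ∈ Set.Ioo (0:ℝ) 1) (hM : 0 ≤ M) :
    1 + (1 - z) * M / k ≤ 1 + (1 - a * z) * M / k := by
  have hza : a * z ≤ z := by nlinarith [hz.1, ha.2]
  have : (1 - z) * M / k ≤ (1 - a * z) * M / k := by
    gcongr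
  linarith

lemma psi_nonneg {k z M : ℝ} (hk : 0 < k) (hz : z ∈ Set.Ioo (0:ℝ) 1) (hM : 0 ≤ M) :
    0 ≤ psi k z M :=
  Real.rpow_nonneg (by linarith [base_one_le hk hz hM]) _

lemma phi_mem {k z a M : ℝ} (hk : 0 < k) (hz : z ∈ Set.Ioo (0:ℝ) 1)
    (ha : a ∈ Set.Ioo (0:ℝ) 1) (hM : 0 ≤ M) : phi k z a M ∈ Set.Icc (0:ℝ) 1 := by
  have h1 := base_one_le hk hz hM
  have h2 := base_le_base hk hz ha hM
  have hratio : (1:ℝ) ≤ (1 + (1 - a * z) * M / k) / (1 + (1 - z) * M / k) :=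
    (one_le_div (by linarith)).2 h2
  constructor
  · have := Real.rpow_le_one_of_one_le_of_nonpos hratio (by linarith : -(k+1) ≤ 0)
    simp only [phi]; linarith
  · have := Real.rpow_nonneg (by linarith : (0:ℝ) ≤ (1 + (1 - a * z) * M / k) / (1 + (1 - z) * M / k)) (-(k+1))
    simp only [phi]; linarith

lemma Ffun_nonneg {k z a M : ℝ} (hk : 0 < k) (hz : z ∈ Set.Ioo (0:ℝ) 1)
    (ha : a ∈ Set.Ioo (0:ℝ) 1) (hM : 0 ≤ M) : 0 ≤ Ffun k z a M :=
  mul_nonneg (psi_nonneg hk hz hM) (phi_mem hk hz ha hM).1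

lemma Ffun_le_psi {k z a M : ℝ} (hk : 0 < k) (hz : z ∈ Set.Ioo (0:ℝ) 1)
    (ha : a ∈ Set.Ioo (0:ℝ) 1) (hM : 0 ≤ M) : Ffun k z a M ≤ psi k z M := by
  calc Ffun k z a M ≤ psi k z M * 1 :=
        mul_le_mul_of_nonneg_left (phi_mem hk hz ha hM).2 (psi_nonneg hk hz hM)
    _ = psi k z M := mul_one _

lemma psi_tendsto {k z : ℝ} (hk : 0 < k) (hz : z ∈ Set.Ioo (0:ℝ) 1) :
    Filter.Tendsto (psi k z) Filter.atTop (nhds 0) := by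
  have hb : Filter.Tendsto (fun M => 1 + (1 - z) * M / k) Filter.atTop Filter.atTop := by
    apply Filter.tendsto_atTop_add_const_left
    have : (fun M : ℝ => (1 - z) * M / k) = fun M => ((1 - z) / k) * M := by
      ext M; ring
    rw [this]
    exact Filter.Tendsto.const_mul_atTop (div_pos (by linarith [hz.2]) hk) Filter.tendsto_id
  exact (tendsto_rpow_neg_atTop (by linarith : (0:ℝ) < k + 1)).comp hb

lemma Ffun_tendsto {k z a : ℝ} (hk : 0 < k) (hz : z ∈ Set.Ioo (0:ℝ) 1)
    (ha : a ∈ Set.Ioo (0:ℝ) 1) :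
    Filter.Tendsto (Ffun k z a) Filter.atTop (nhds 0) := by
  apply squeeze_zero' (g := psi k z)
  · filter_upwards [Filter.eventually_ge_atTop 0] with M hM
    exact Ffun_nonneg hk hz ha hM
  · filter_upwards [Filter.eventually_ge_atTop 0] with M hM
    exact Ffun_le_psi hk hz ha hM
  · exact psi_tendsto hk hz

lemma Ffun_contAt {k z a M : ℝ} (hk : 0 < k) (hz : z ∈ Set.Ioo (0:ℝ) 1)
    (ha : a ∈ Set.Ioo (0:ℝ) 1) (hM : 0 ≤ M) : ContinuousAt (Ffun k z a) M := by
  have h1 := base_one_le hk hz hM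
  have h2 : 1 + (1 - z) * M / k ≠ 0 := by linarith
  have cb : ContinuousAt (fun M : ℝ => 1 + (1 - z) * M / k) M := by fun_prop
  have cb2 : ContinuousAt (fun M : ℝ => 1 + (1 - a * z) * M / k) M := by fun_prop
  apply ContinuousAt.mul
  · exact ContinuousAt.rpow_const cb (Or.inl h2)
  · apply ContinuousAt.sub continuousAt_const
    apply ContinuousAt.rpow_const (cb2.div cb h2)
    left
    have h3 := base_le_base hk hz ha hM
    have h4 : (0:ℝ) < (1 + (1 - a * z) * M / k) / (1 + (1 - z) * M / k) :=
      div_pos (by linarith) (by linarith)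
    simp only [Pi.div_apply]
    exact ne_of_gt h4

lemma Gfun_contAt {k z a c eh es M : ℝ} (hk : 0 < k) (hz : z ∈ Set.Ioo (0:ℝ) 1)
    (ha : a ∈ Set.Ioo (0:ℝ) 1) (heh : eh ∈ Set.Ico (0:ℝ) 1) (hM : 0 ≤ M) :
    ContinuousAt (Gfun k z a c eh es) M := by
  have c1 : ContinuousAt (fun m : ℝ => Ffun k z a m) M := Ffun_contAt hk hz ha hM
  have c2 : ContinuousAt (fun m : ℝ => Ffun k z a ((1 - eh) * m)) M := by
    have : (0:ℝ) ≤ (1 - eh) * M := mul_nonneg (by linarith [heh.2]) hM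
    exact (Ffun_contAt hk hz ha this).comp (by fun_prop)
  exact (continuousAt_const.mul c1).add (continuousAt_const.mul c2)

lemma Gfun_zero {k z a c eh es : ℝ} : Gfun k z a c eh es 0 = 0 := by
  have h : phi k z a 0 = 0 := by
    simp [phi, Real.one_rpow]
  simp [Gfun, Ffun, h]

lemma Gfun_tendsto {k z a c eh es : ℝ} (hk : 0 < k) (hz : z ∈ Set.Ioo (0:ℝ) 1)
    (ha : a ∈ Set.Ioo (0:ℝ) 1) (heh : eh ∈ Set.Ico (0:ℝ) 1) :
    Filter.Tendsto (Gfun k z a c eh es) Filter.atTop (nhds 0) := by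
  have h1 : (0:ℝ) < 1 - eh := by linarith [heh.2]
  have hcomp : Filter.Tendsto (fun m : ℝ => (1 - eh) * m) Filter.atTop Filter.atTop :=
    Filter.Tendsto.const_mul_atTop h1 Filter.tendsto_id
  have hF := Ffun_tendsto hk hz ha (k := k) (z := z) (a := a)
  have := ((hF.const_mul (1 - c)).add ((hF.comp hcomp).const_mul (c * (1 - es) * (1 - eh))))
  simp only [mul_zero, add_zero] at this
  exact this


lemma equil {k z a beta rho c eh es muH muP R0 m : ℝ}
    (hbeta : beta ≠ 0) (hrho : rho ≠ 0)
    (h : R0 * Gfun k z a c eh es m = 1) :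
    f0 k z a beta rho c eh es muH muP R0 m ((1 - eh) * m) = 0 ∧
    f1 k z a beta rho c eh es muH muP R0 m ((1 - eh) * m) = 0 := by
  unfold Gfun at h
  unfold f0 f1
  constructor
  · have key : R0 * beta / (beta * rho) * (rho * (1 - c) * m * Ffun k z a m +
        (rho * (1 - es)) * c * ((1 - eh) * m) * Ffun k z a ((1 - eh) * m)) = m := by
      rw [div_mul_eq_mul_div, div_eq_iff (mul_ne_zero hbeta hrho)]
      linear_combination m * beta * rho * h
    linear_combination (muH + muP) * key
  · have key : R0 * (beta * (1 - eh)) / (beta * rho) * (rho * (1 - c) * m * Ffun k z a m +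
        (rho * (1 - es)) * c * ((1 - eh) * m) * Ffun k z a ((1 - eh) * m)) = (1 - eh) * m := by
      rw [div_mul_eq_mul_div, div_eq_iff (mul_ne_zero hbeta hrho)]
      linear_combination (1 - eh) * m * beta * rho * h
    linear_combination (muH + muP) * key

/-- If R0·G(m^b) > 1 at a global maximum point m^b > 0 of G on [0,∞), then there exist
0 < m_u < m^b < m_s with R0·G(m_u) = 1 and R0·G(m_s) = 1; consequently
(m_u,(1−e_h)m_u) and (m_s,(1−e_h)m_s) are two distinct nontrivial equilibria. -/
theorem stmt15 (k z a beta rho c eh es muH muP R0 : ℝ)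
    (hk : 0 < k) (hz : z ∈ Set.Ioo (0:ℝ) 1) (ha : a ∈ Set.Ioo (0:ℝ) 1)
    (hbeta : 0 < beta) (hrho : 0 < rho) (hc : c ∈ Set.Ioo (0:ℝ) 1)
    (heh : eh ∈ Set.Ico (0:ℝ) 1) (hes : es ∈ Set.Ico (0:ℝ) 1)
    (hmuH : 0 < muH) (hmuP : 0 < muP) (hR0 : 0 < R0)
    (mb : ℝ) (hmb : 0 < mb)
    (hmax : ∀ m : ℝ, 0 ≤ m → Gfun k z a c eh es m ≤ Gfun k z a c eh es mb)
    (hgt : 1 < R0 * Gfun k z a c eh es mb) :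
    ∃ mu ms : ℝ, 0 < mu ∧ mu < mb ∧ mb < ms ∧
      R0 * Gfun k z a c eh es mu = 1 ∧ R0 * Gfun k z a c eh es ms = 1 ∧
      f0 k z a beta rho c eh es muH muP R0 mu ((1 - eh) * mu) = 0 ∧
      f1 k z a beta rho c eh es muH muP R0 mu ((1 - eh) * mu) = 0 ∧
      f0 k z a beta rho c eh es muH muP R0 ms ((1 - eh) * ms) = 0 ∧
      f1 k z a beta rho c eh es muH muP R0 ms ((1 - eh) * ms) = 0 ∧
      (mu, (1 - eh) * mu) ≠ (ms, (1 - eh) * ms) := by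
  set G := Gfun k z a c eh es with hGdef
  have hGmb : 1 / R0 < G mb := by rw [div_lt_iff₀ hR0]; linarith
  have hG0 : G 0 = 0 := Gfun_zero
  have hpos : (0:ℝ) < 1 / R0 := by positivity
  -- find mu
  have hc1 : ContinuousOn G (Set.Icc 0 mb) := fun x hx =>
    (Gfun_contAt hk hz ha heh hx.1).continuousWithinAt
  have h1 := intermediate_value_Ioo hmb.le hc1
  obtain ⟨mu, hmu, hGmu⟩ := h1 ⟨by rw [hG0]; exact hpos, hGmb⟩
  -- find T with G T < 1/R0
  have htend := Gfun_tendsto (c := c) (es := es) hk hz ha heh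
  have hev : ∀ᶠ m in Filter.atTop, G m < 1 / R0 :=
    htend.eventually (Filter.Tendsto.eventually_lt_const hpos Filter.tendsto_id)
  obtain ⟨T, hT⟩ := (hev.and (Filter.eventually_gt_atTop mb)).exists
  have hc2 : ContinuousOn G (Set.Icc mb T) := fun x hx =>
    (Gfun_contAt hk hz ha heh (by linarith [hx.1])).continuousWithinAt
  have h2 := intermediate_value_Ioo' hT.2.le hc2
  obtain ⟨ms, hms, hGms⟩ := h2 ⟨hT.1, hGmb⟩
  have hRmu : R0 * G mu = 1 := by rw [hGmu]; field_simp
  have hRms : R0 * G ms = 1 := by rw [hGms]; field_simp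
  obtain ⟨e0u, e1u⟩ := equil (muH := muH) (muP := muP) hbeta.ne' hrho.ne' hRmu
  obtain ⟨e0s, e1s⟩ := equil (muH := muH) (muP := muP) hbeta.ne' hrho.ne' hRms
  refine ⟨mu, ms, hmu.1, hmu.2, hms.1, hRmu, hRms, e0u, e1u, e0s, e1s, ?_⟩
  intro hcontra
  have : mu = ms := (Prod.mk.injEq _ _ _ _ ▸ hcontra).1
  linarith [hmu.2, hms.1]
end

section
/- If R0·G(m) < 1 for all m > 0, then the disease-free equilibrium (0,0) is the unique equilibrium of the extended reduced model in the nonnegative quadrant: for M_0, M_1 ≥ 0, f_0(M_0,M_1) = f_1(M_0,M_1) = 0 implies M_0 = M_1 = 0. -/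
/-- If R0·G(m) < 1 for all m > 0, then (0,0) is the unique equilibrium of the extended
reduced model in the nonnegative quadrant. -/
theorem stmt16 (k z a beta rho c eh es muH muP R0 : ℝ)
    (hk : 0 < k) (hz : z ∈ Set.Ioo (0:ℝ) 1) (ha : a ∈ Set.Ioo (0:ℝ) 1)
    (hbeta : 0 < beta) (hrho : 0 < rho) (hc : c ∈ Set.Ioo (0:ℝ) 1)
    (heh : eh ∈ Set.Ico (0:ℝ) 1) (hes : es ∈ Set.Ico (0:ℝ) 1)
    (hmuH : 0 < muH) (hmuP : 0 < muP) (hR0 : 0 < R0)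
    (hsub : ∀ m : ℝ, 0 < m → R0 * Gfun k z a c eh es m < 1) :
    ∀ M0 M1 : ℝ, 0 ≤ M0 → 0 ≤ M1 →
      f0 k z a beta rho c eh es muH muP R0 M0 M1 = 0 →
      f1 k z a beta rho c eh es muH muP R0 M0 M1 = 0 →
      M0 = 0 ∧ M1 = 0 := by
  intro M0 M1 h0 h1 hf0 hf1
  have hmu : muH + muP ≠ 0 := by positivity
  have hb : beta ≠ 0 := ne_of_gt hbeta
  have hr : rho ≠ 0 := ne_of_gt hrho
  unfold f0 at hf0
  unfold f1 at hf1
  have e0 : (R0 * beta / (beta * rho)) *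
      (rho * (1 - c) * M0 * Ffun k z a M0 +
        (rho * (1 - es)) * c * M1 * Ffun k z a M1) = M0 := by
    rcases mul_eq_zero.mp hf0 with h | h
    · exact absurd h hmu
    · linarith
  have e1 : (R0 * (beta * (1 - eh)) / (beta * rho)) *
      (rho * (1 - c) * M0 * Ffun k z a M0 +
        (rho * (1 - es)) * c * M1 * Ffun k z a M1) = M1 := by
    rcases mul_eq_zero.mp hf1 with h | h
    · exact absurd h hmu
    · linarith
  have hM1 : M1 = (1 - eh) * M0 := by
    linear_combination (1 - eh) * e0 - e1
  rw [hM1] at e0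
  field_simp at e0
  have hM0 : M0 = 0 := by
    by_contra hne
    have hpos : 0 < M0 := lt_of_le_of_ne h0 (Ne.symm hne)
    have hG := hsub M0 hpos
    rw [Gfun] at hG
    rw [mul_comm M0 (1 - eh)] at e0
    nlinarith [mul_lt_mul_of_pos_left hG (mul_pos (mul_pos hbeta hrho) hpos), mul_lt_mul_of_pos_left hG hpos]
  exact ⟨hM0, by rw [hM1, hM0, mul_zero]⟩
end

section
/- Let m* > 0 satisfy R0·G(m*) = 1 and let E* = (m*, (1−e_h)m*). Then the Jacobian matrix of (f_0, f_1) at E* has characteristic polynomial (λ + (μ_H+μ_P))·(λ − (μ_H+μ_P)·R0·m*·G′(m*)), i.e. its eigenvalues are −(μ_H+μ_P) and (μ_H+μ_P)·R0·m*·G′(m*); consequently E* is locally asymptotically stable if G′(m*) < 0 (the endemic equilibrium) and unstable if G′(m*) > 0 (the transmission breakpoint). -/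
open Matrix Polynomial

lemma Ffun_diffAt (k z a M : ℝ) (hk : 0 < k) (hz : z ∈ Set.Ioo (0:ℝ) 1)
    (ha : a ∈ Set.Ioo (0:ℝ) 1) (hM : 0 < M) :
    DifferentiableAt ℝ (Ffun k z a) M := by
  obtain ⟨hz0, hz1⟩ := hz
  obtain ⟨ha0, ha1⟩ := ha
  have h1 : (0:ℝ) < 1 + (1 - z) * M / k := by
    have : 0 ≤ (1 - z) * M / k := div_nonneg (mul_nonneg (by linarith) hM.le) hk.le
    linarith
  have h2 : (0:ℝ) < 1 + (1 - a * z) * M / k := by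
    have haz : a * z < 1 := by nlinarith
    have : 0 ≤ (1 - a * z) * M / k := div_nonneg (mul_nonneg (by linarith) hM.le) hk.le
    linarith
  have hb1 : DifferentiableAt ℝ (fun M : ℝ => 1 + (1 - z) * M / k) M := by fun_prop
  have hb2 : DifferentiableAt ℝ (fun M : ℝ => 1 + (1 - a * z) * M / k) M := by fun_prop
  have hpsi : DifferentiableAt ℝ (psi k z) M := by
    unfold psi; exact hb1.rpow_const (Or.inl h1.ne')
  have hphi : DifferentiableAt ℝ (phi k z a) M := by
    unfold phi
    apply DifferentiableAt.const_sub
    exact (hb2.div hb1 h1.ne').rpow_const (Or.inl (div_pos h2 h1).ne')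
  exact hpsi.mul hphi

lemma charpoly_two_aux (p q r s mu lam : ℝ) (htr : p + s = lam - mu)
    (hdet : p * s - q * r = -(mu * lam)) :
    (!![p, q; r, s] : Matrix (Fin 2) (Fin 2) ℝ).charpoly = (X + C mu) * (X - C lam) := by
  have h1 : (C p : ℝ[X]) + C s = C lam - C mu := by rw [← C_add, htr, C_sub]
  have h2 : (C p : ℝ[X]) * C s - C q * C r = -(C mu * C lam) := by
    rw [← C_mul, ← C_mul, ← C_sub, hdet, C_neg, C_mul]
  rw [Matrix.charpoly, Matrix.det_fin_two]
  simp [charmatrix_apply_eq, charmatrix_apply_ne, Matrix.charmatrix_apply]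
  linear_combination (-(X : ℝ[X])) * h1 + h2

/-- At a nontrivial equilibrium E* = (m*, (1−e_h)m*) with R0·G(m*) = 1, the Jacobian of
(f_0, f_1) has characteristic polynomial (λ+(μ_H+μ_P))·(λ−(μ_H+μ_P)R0 m* G′(m*)), i.e.
eigenvalues −(μ_H+μ_P) and (μ_H+μ_P)R0 m* G′(m*); consequently E* is locally
asymptotically stable if G′(m*) < 0 and unstable if G′(m*) > 0. -/
theorem stmt18 (k z a beta rho c eh es muH muP R0 : ℝ)
    (hk : 0 < k) (hz : z ∈ Set.Ioo (0:ℝ) 1) (ha : a ∈ Set.Ioo (0:ℝ) 1)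
    (hbeta : 0 < beta) (hrho : 0 < rho) (hc : c ∈ Set.Ioo (0:ℝ) 1)
    (heh : eh ∈ Set.Ico (0:ℝ) 1) (hes : es ∈ Set.Ico (0:ℝ) 1)
    (hmuH : 0 < muH) (hmuP : 0 < muP) (hR0 : 0 < R0)
    (mstar : ℝ) (hmstar : 0 < mstar) (heq : R0 * Gfun k z a c eh es mstar = 1) :
    (!![deriv (fun x => f0 k z a beta rho c eh es muH muP R0 x ((1 - eh) * mstar)) mstar,
        deriv (fun y => f0 k z a beta rho c eh es muH muP R0 mstar y) ((1 - eh) * mstar);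
        deriv (fun x => f1 k z a beta rho c eh es muH muP R0 x ((1 - eh) * mstar)) mstar,
        deriv (fun y => f1 k z a beta rho c eh es muH muP R0 mstar y) ((1 - eh) * mstar)]
      : Matrix (Fin 2) (Fin 2) ℝ).charpoly =
      (X + C (muH + muP)) *
        (X - C ((muH + muP) * R0 * mstar * deriv (Gfun k z a c eh es) mstar)) ∧
    (deriv (Gfun k z a c eh es) mstar < 0 →
      -(muH + muP) < 0 ∧ (muH + muP) * R0 * mstar * deriv (Gfun k z a c eh es) mstar < 0) ∧
    (0 < deriv (Gfun k z a c eh es) mstar →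
      0 < (muH + muP) * R0 * mstar * deriv (Gfun k z a c eh es) mstar) := by
  have hw : 0 < (1 - eh) * mstar := mul_pos (by linarith [heh.2]) hmstar
  have hF0 : HasDerivAt (Ffun k z a) (deriv (Ffun k z a) mstar) mstar :=
    (Ffun_diffAt k z a mstar hk hz ha hmstar).hasDerivAt
  have hF1 : HasDerivAt (Ffun k z a) (deriv (Ffun k z a) ((1 - eh) * mstar)) ((1 - eh) * mstar) :=
    (Ffun_diffAt k z a ((1 - eh) * mstar) hk hz ha hw).hasDerivAt
  set d0 := deriv (Ffun k z a) mstar with hd0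
  set d1 := deriv (Ffun k z a) ((1 - eh) * mstar) with hd1
  -- derivative of x ↦ rho(1-c) x F(x) at mstar
  have hxF : HasDerivAt (fun x : ℝ => rho * (1 - c) * x * Ffun k z a x)
      ((rho * (1 - c) * 1) * Ffun k z a mstar + (rho * (1 - c) * mstar) * d0) mstar :=
    ((hasDerivAt_id mstar).const_mul (rho * (1 - c))).mul hF0
  -- derivative of y ↦ rho(1-es) c y F(y) at w
  have hyF : HasDerivAt (fun y : ℝ => (rho * (1 - es)) * c * y * Ffun k z a y)
      (((rho * (1 - es)) * c * 1) * Ffun k z a ((1 - eh) * mstar)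
        + ((rho * (1 - es)) * c * ((1 - eh) * mstar)) * d1) ((1 - eh) * mstar) :=
    ((hasDerivAt_id ((1 - eh) * mstar)).const_mul ((rho * (1 - es)) * c)).mul hF1
  have hbr : beta * rho ≠ 0 := by positivity
  have e00 : deriv (fun x => f0 k z a beta rho c eh es muH muP R0 x ((1 - eh) * mstar)) mstar
      = (muH + muP) * (R0 * (1 - c) * Ffun k z a mstar + R0 * (1 - c) * mstar * d0 - 1) := by
    simp only [f0]
    have hd := ((((hxF.add_const
      ((rho * (1 - es)) * c * ((1 - eh) * mstar) * Ffun k z a ((1 - eh) * mstar))).const_mul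
      (R0 * beta / (beta * rho))).sub (hasDerivAt_id' mstar)).const_mul (muH + muP)).deriv
    simp only [Pi.sub_apply] at hd
    rw [hd]
    field_simp
  have e01 : deriv (fun y => f0 k z a beta rho c eh es muH muP R0 mstar y) ((1 - eh) * mstar)
      = (muH + muP) * (R0 * (1 - es) * c * Ffun k z a ((1 - eh) * mstar)
          + R0 * (1 - es) * c * ((1 - eh) * mstar) * d1) := by
    simp only [f0]
    rw [((((hyF.const_add (rho * (1 - c) * mstar * Ffun k z a mstar)).const_mul
      (R0 * beta / (beta * rho))).sub_const mstar).const_mul (muH + muP)).deriv]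
    field_simp
  have e10 : deriv (fun x => f1 k z a beta rho c eh es muH muP R0 x ((1 - eh) * mstar)) mstar
      = (muH + muP) * (R0 * (1 - eh) * (1 - c) * Ffun k z a mstar
          + R0 * (1 - eh) * (1 - c) * mstar * d0) := by
    simp only [f1]
    rw [((((hxF.add_const
      ((rho * (1 - es)) * c * ((1 - eh) * mstar) * Ffun k z a ((1 - eh) * mstar))).const_mul
      (R0 * (beta * (1 - eh)) / (beta * rho))).sub_const ((1 - eh) * mstar)).const_mul
      (muH + muP)).deriv]
    field_simp
  have e11 : deriv (fun y => f1 k z a beta rho c eh es muH muP R0 mstar y) ((1 - eh) * mstar)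
      = (muH + muP) * (R0 * (1 - eh) * (1 - es) * c * Ffun k z a ((1 - eh) * mstar)
          + R0 * (1 - eh) * (1 - es) * c * ((1 - eh) * mstar) * d1 - 1) := by
    simp only [f1]
    have hd := ((((hyF.const_add (rho * (1 - c) * mstar * Ffun k z a mstar)).const_mul
      (R0 * (beta * (1 - eh)) / (beta * rho))).sub (hasDerivAt_id' ((1 - eh) * mstar))).const_mul
      (muH + muP)).deriv
    simp only [Pi.sub_apply] at hd
    rw [hd]
    field_simp
  -- derivative of Gfun at mstar
  have hchain : HasDerivAt (fun m : ℝ => Ffun k z a ((1 - eh) * m)) (d1 * ((1 - eh) * 1)) mstar :=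
    hF1.comp mstar ((hasDerivAt_id mstar).const_mul (1 - eh))
  have hG : HasDerivAt (Gfun k z a c eh es)
      ((1 - c) * d0 + (c * (1 - es) * (1 - eh)) * (d1 * ((1 - eh) * 1))) mstar := by
    unfold Gfun
    exact (hF0.const_mul (1 - c)).add (hchain.const_mul (c * (1 - es) * (1 - eh)))
  have dGval : deriv (Gfun k z a c eh es) mstar
      = (1 - c) * d0 + c * (1 - es) * (1 - eh) * (1 - eh) * d1 := by
    rw [hG.deriv]; ring
  have heq' : R0 * ((1 - c) * Ffun k z a mstar
      + c * (1 - es) * (1 - eh) * Ffun k z a ((1 - eh) * mstar)) = 1 := by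
    have h := heq
    simp only [Gfun] at h
    exact h
  rw [e00, e01, e10, e11, dGval]
  have hmu : 0 < muH + muP := by linarith
  have hpos : 0 < (muH + muP) * R0 * mstar := mul_pos (mul_pos hmu hR0) hmstar
  refine ⟨charpoly_two_aux _ _ _ _ _ _ ?_ ?_, fun h => ⟨by linarith, ?_⟩, fun h => ?_⟩
  · linear_combination (muH + muP) * heq'
  · linear_combination (-(muH + muP) * (muH + muP)) * heq'
  · exact mul_neg_of_pos_of_neg hpos h
  · exact mul_pos hpos h
end

section
/- Suppose m^b > 0 satisfies G′(m^b) = 0 and G″(m^b) ≠ 0, and set R0^b = 1/G(m^b) (with G(m^b) > 0). Then the restriction of the extended reduced model to the invariant line, h(m, R0) = (μ_H+μ_P)·(R0·G(m) − 1)·m, satisfies the Sotomayor saddle-node conditions at (m^b, R0^b): h(m^b, R0^b) = 0, ∂h/∂m(m^b, R0^b) = 0, ∂²h/∂m²(m^b, R0^b) = (μ_H+μ_P)·R0^b·m^b·G″(m^b) ≠ 0, and ∂h/∂R0(m^b, R0^b) = (μ_H+μ_P)·m^b·G(m^b) ≠ 0. -/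
/-- Restriction of the extended reduced model to the invariant line:
h(m, R0) = (μ_H+μ_P)·(R0·G(m) − 1)·m. -/
noncomputable def hfun (k z a c eh es muH muP R0 m : ℝ) : ℝ :=
  (muH + muP) * (R0 * Gfun k z a c eh es m - 1) * m

lemma Fdiff (k z a : ℝ) (hk : 0 < k) (hz : z ∈ Set.Ioo (0:ℝ) 1) (ha : a ∈ Set.Ioo (0:ℝ) 1)
    (y : ℝ) (hy : 0 ≤ y) : DifferentiableAt ℝ (Ffun k z a) y := by
  obtain ⟨hz0, hz1⟩ := hz
  obtain ⟨ha0, ha1⟩ := ha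
  have haz : a * z < 1 := by nlinarith
  have h1 : (0:ℝ) < 1 + (1 - z) * y / k := by
    have : 0 ≤ (1 - z) * y / k :=
      div_nonneg (mul_nonneg (by linarith) hy) hk.le
    linarith
  have h2 : (0:ℝ) < 1 + (1 - a * z) * y / k := by
    have : 0 ≤ (1 - a * z) * y / k := by
      apply div_nonneg _ hk.le
      exact mul_nonneg (by linarith) hy
    linarith
  have hd1 : DifferentiableAt ℝ (fun M => 1 + (1 - z) * M / k) y := by fun_prop
  have hd2 : DifferentiableAt ℝ (fun M => 1 + (1 - a * z) * M / k) y := by fun_prop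
  have hpsi : DifferentiableAt ℝ (psi k z) y := by
    unfold psi
    exact hd1.rpow_const (Or.inl h1.ne')
  have hphi : DifferentiableAt ℝ (phi k z a) y := by
    unfold phi
    apply DifferentiableAt.const_sub
    apply DifferentiableAt.rpow_const (hd2.div hd1 h1.ne')
    exact Or.inl (div_pos h2 h1).ne'
  exact hpsi.mul hphi

lemma Gdiff (k z a c eh es : ℝ) (hk : 0 < k) (hz : z ∈ Set.Ioo (0:ℝ) 1)
    (ha : a ∈ Set.Ioo (0:ℝ) 1) (heh : eh ∈ Set.Ico (0:ℝ) 1)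
    (y : ℝ) (hy : 0 < y) : DifferentiableAt ℝ (Gfun k z a c eh es) y := by
  have hF1 := Fdiff k z a hk hz ha y hy.le
  have hF2 := Fdiff k z a hk hz ha ((1 - eh) * y)
    (mul_nonneg (by linarith [heh.2]) hy.le)
  have hcomp : DifferentiableAt ℝ (fun m => Ffun k z a ((1 - eh) * m)) y :=
    hF2.comp y (by fun_prop)
  unfold Gfun
  exact (hF1.const_mul _).add (hcomp.const_mul _)

/-- Sotomayor saddle-node conditions for h at (m^b, R0^b) with R0^b = 1/G(m^b), when
G′(m^b) = 0 and G″(m^b) ≠ 0. -/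
theorem stmt19 (k z a c eh es muH muP : ℝ)
    (hk : 0 < k) (hz : z ∈ Set.Ioo (0:ℝ) 1) (ha : a ∈ Set.Ioo (0:ℝ) 1)
    (hc : c ∈ Set.Ioo (0:ℝ) 1) (heh : eh ∈ Set.Ico (0:ℝ) 1) (hes : es ∈ Set.Ico (0:ℝ) 1)
    (hmuH : 0 < muH) (hmuP : 0 < muP)
    (mb : ℝ) (hmb : 0 < mb) (hder : deriv (Gfun k z a c eh es) mb = 0)
    (hder2 : deriv (deriv (Gfun k z a c eh es)) mb ≠ 0)
    (hGpos : 0 < Gfun k z a c eh es mb)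
    (R0b : ℝ) (hR0b : R0b = 1 / Gfun k z a c eh es mb) :
    hfun k z a c eh es muH muP R0b mb = 0 ∧
    deriv (fun m => hfun k z a c eh es muH muP R0b m) mb = 0 ∧
    deriv (deriv (fun m => hfun k z a c eh es muH muP R0b m)) mb =
      (muH + muP) * R0b * mb * deriv (deriv (Gfun k z a c eh es)) mb ∧
    deriv (deriv (fun m => hfun k z a c eh es muH muP R0b m)) mb ≠ 0 ∧
    deriv (fun r => hfun k z a c eh es muH muP r mb) R0b =
      (muH + muP) * mb * Gfun k z a c eh es mb ∧
    deriv (fun r => hfun k z a c eh es muH muP r mb) R0b ≠ 0 := by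
  set G := Gfun k z a c eh es with hGdef
  have hmu : (0:ℝ) < muH + muP := by linarith
  have hG0 : G mb ≠ 0 := ne_of_gt hGpos
  have h1 : R0b * G mb = 1 := by rw [hR0b]; field_simp
  have hR0pos : 0 < R0b := by rw [hR0b]; positivity
  -- derivative formula for h on Ioi 0
  have hderiv_f : ∀ x ∈ Set.Ioi (0:ℝ),
      HasDerivAt (fun m => hfun k z a c eh es muH muP R0b m)
        ((muH + muP) * ((R0b * deriv G x) * x + (R0b * G x - 1))) x := by
    intro x hx
    have hGd : HasDerivAt G (deriv G x) x :=
      (Gdiff k z a c eh es hk hz ha heh x hx).hasDerivAt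
    have := ((((hGd.const_mul R0b).sub_const 1).mul (hasDerivAt_id x)).const_mul
      (muH + muP))
    refine (this.congr_deriv (by simp only [id_eq]; ring)).congr_of_eventuallyEq
      (Filter.Eventually.of_forall fun m => ?_)
    simp only [hfun, ← hGdef, Pi.mul_apply, id_eq]; ring
  have hderiv_f_mb := hderiv_f mb hmb
  -- second differentiability of G at mb
  have hd2 : DifferentiableAt ℝ (deriv G) mb := by
    by_contra h
    exact hder2 (deriv_zero_of_not_differentiableAt h)
  have hGd : DifferentiableAt ℝ G mb := Gdiff k z a c eh es hk hz ha heh mb hmb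
  -- part 1
  have p1 : hfun k z a c eh es muH muP R0b mb = 0 := by
    unfold hfun; rw [← hGdef, h1]; ring
  -- part 2
  have p2 : deriv (fun m => hfun k z a c eh es muH muP R0b m) mb = 0 := by
    rw [hderiv_f_mb.deriv, hder, h1]; ring
  -- eventual equality of deriv h with the explicit formula
  have hev : Set.Ioi (0:ℝ) ∈ nhds mb := Ioi_mem_nhds hmb
  have heq : deriv (fun m => hfun k z a c eh es muH muP R0b m) =ᶠ[nhds mb]
      (fun x => (muH + muP) * ((R0b * deriv G x) * x + (R0b * G x - 1))) := by
    filter_upwards [hev] with x hx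
    exact (hderiv_f x hx).deriv
  -- part 3
  have hDh : HasDerivAt (fun x => (muH + muP) * ((R0b * deriv G x) * x + (R0b * G x - 1)))
      ((muH + muP) * (((R0b * deriv (deriv G) mb) * mb + (R0b * deriv G mb) * 1)
        + R0b * deriv G mb)) mb := by
    have h2 : HasDerivAt (deriv G) (deriv (deriv G) mb) mb := hd2.hasDerivAt
    have hA := ((h2.const_mul R0b).mul (hasDerivAt_id mb))
    have hB := ((hGd.hasDerivAt.const_mul R0b).sub_const 1)
    exact (hA.add hB).const_mul (muH + muP)
  have p3 : deriv (deriv (fun m => hfun k z a c eh es muH muP R0b m)) mb =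
      (muH + muP) * R0b * mb * deriv (deriv G) mb := by
    rw [heq.deriv_eq, hDh.deriv, hder]; ring
  have p4 : deriv (deriv (fun m => hfun k z a c eh es muH muP R0b m)) mb ≠ 0 := by
    rw [p3]
    exact mul_ne_zero (mul_ne_zero (mul_ne_zero hmu.ne' hR0pos.ne') hmb.ne') hder2
  -- part 5
  have hDr : HasDerivAt (fun r => hfun k z a c eh es muH muP r mb)
      ((muH + muP) * mb * G mb) R0b := by
    have := ((((hasDerivAt_id R0b).mul_const (G mb)).sub_const 1).mul_const mb).const_mul
      (muH + muP)
    refine (this.congr_deriv (by ring)).congr_of_eventuallyEq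
      (Filter.Eventually.of_forall fun r => ?_)
    simp only [hfun, ← hGdef, id_eq]; ring
  have p5 := hDr.deriv
  have p6 : deriv (fun r => hfun k z a c eh es muH muP r mb) R0b ≠ 0 := by
    rw [p5]
    exact mul_ne_zero (mul_ne_zero hmu.ne' hmb.ne') hG0
  exact ⟨p1, p2, p3, p4, p5, p6⟩
end
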